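/- arXiv:1511.04385 — 7 statements merged into one kernel-verified Lean document; each statement's English description precedes it below -/
import Mathlib

section
/- Let N = (2q₁+1)(2q₂+1) be a safe semiprime with q₁ ≠ q₂ and q₁, q₂ > 2. Then the multiplicative order of 2 modulo N is either q₁·q₂ or 2·q₁·q₂. -/
/-!
Modulo each safe prime `p = 2q + 1` Fermat gives `2 ^ (2q) = 1`, while `2 ^ 2 = 4 ≠ 1` because
`p ≠ 3`; hence the order of `2` mod `p` divides `2q` and is divisible by `q`. By the Chinese
remainder theorem the order of `2` mod `N` is the lcm of the two local orders, which is squeezed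
between `lcm q₁ q₂ = q₁q₂` and `lcm (2q₁) (2q₂) = 2q₁q₂`.
-/

theorem Nat.eq_or_eq_two_mul_of_dvd_of_dvd_two_mul {q n : ℕ} (hq : 0 < q) (hqn : q ∣ n)
    (hn : n ∣ 2 * q) : n = q ∨ n = 2 * q := by
  obtain ⟨k, rfl⟩ := hqn
  have hk : k ∣ 2 := Nat.dvd_of_mul_dvd_mul_left hq (by rwa [mul_comm 2] at hn)
  rcases (Nat.dvd_prime Nat.prime_two).mp hk with rfl | rfl
  · exact Or.inl (mul_one q)
  · exact Or.inr (mul_comm q 2)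

theorem Nat.Prime.dvd_orderOf_of_pow_two_mul_eq_one {G : Type*} [Monoid G] {a : G} {q : ℕ}
    (hq : q.Prime) (h : a ^ (2 * q) = 1) (h2 : a ^ 2 ≠ 1) : q ∣ orderOf a := by
  by_contra hndvd
  have hcop : (orderOf a).Coprime q := (hq.coprime_iff_not_dvd.mpr hndvd).symm
  exact h2 (orderOf_dvd_iff_pow_eq_one.mp (hcop.dvd_of_dvd_mul_right (orderOf_dvd_of_pow_eq_one h)))

namespace ZMod

theorem orderOf_natCast_mul_eq_lcm {m n : ℕ} (hmn : m.Coprime n) (a : ℕ) :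
    orderOf (a : ZMod (m * n)) = (orderOf (a : ZMod m)).lcm (orderOf (a : ZMod n)) := by
  rw [← (chineseRemainder hmn).toMulEquiv.orderOf_eq, Prod.orderOf]
  simp

theorem two_sq_ne_one_of_prime {p : ℕ} (hp : p.Prime) (h3 : p ≠ 3) : (2 : ZMod p) ^ 2 ≠ 1 := by
  intro h
  have h3zero : ((3 : ℕ) : ZMod p) = 0 := by
    rw [show ((3 : ℕ) : ZMod p) = 2 ^ 2 - 1 by norm_num, h, sub_self]
  rw [natCast_eq_zero_iff] at h3zero
  exact h3 ((Nat.prime_dvd_prime_iff_eq hp Nat.prime_three).mp h3zero)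

theorem two_pow_sub_one_eq_one {p : ℕ} [Fact p.Prime] (hp2 : p ≠ 2) :
    (2 : ZMod p) ^ (p - 1) = 1 := by
  apply pow_card_sub_one_eq_one
  intro h
  rw [show (2 : ZMod p) = ((2 : ℕ) : ZMod p) by norm_num, natCast_eq_zero_iff] at h
  exact hp2 ((Nat.prime_dvd_prime_iff_eq Fact.out Nat.prime_two).mp h)

theorem two_pow_two_mul_eq_one_of_safe_prime {q : ℕ} (hp : (2 * q + 1).Prime) :
    (2 : ZMod (2 * q + 1)) ^ (2 * q) = 1 := by
  have : Fact (2 * q + 1).Prime := ⟨hp⟩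
  simpa using two_pow_sub_one_eq_one (p := 2 * q + 1) (by omega)

theorem orderOf_two_dvd_of_safe_prime {q : ℕ} (hp : (2 * q + 1).Prime) :
    orderOf (2 : ZMod (2 * q + 1)) ∣ 2 * q :=
  orderOf_dvd_of_pow_eq_one (two_pow_two_mul_eq_one_of_safe_prime hp)

theorem dvd_orderOf_two_of_safe_prime {q : ℕ} (hp : (2 * q + 1).Prime) (hq : q.Prime) :
    q ∣ orderOf (2 : ZMod (2 * q + 1)) :=
  hq.dvd_orderOf_of_pow_two_mul_eq_one (two_pow_two_mul_eq_one_of_safe_prime hp)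
    (two_sq_ne_one_of_prime hp (by have := hq.two_le; omega))

end ZMod

theorem order_of_two_mod_safe_semiprime_general
    (q₁ q₂ N : ℕ) (hq₁ : q₁.Prime) (hq₂ : q₂.Prime)
    (hp₁ : (2 * q₁ + 1).Prime) (hp₂ : (2 * q₂ + 1).Prime)
    (hne : q₁ ≠ q₂)
    (hN : N = (2 * q₁ + 1) * (2 * q₂ + 1)) :
    orderOf (2 : ZMod N) = q₁ * q₂ ∨ orderOf (2 : ZMod N) = 2 * q₁ * q₂ := by
  subst hN
  have hcop : (2 * q₁ + 1).Coprime (2 * q₂ + 1) := (Nat.coprime_primes hp₁ hp₂).mpr (by omega)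
  have hlcm := ZMod.orderOf_natCast_mul_eq_lcm hcop 2
  simp only [Nat.cast_ofNat] at hlcm
  have hlower : q₁ * q₂ ∣ orderOf (2 : ZMod ((2 * q₁ + 1) * (2 * q₂ + 1))) := by
    rw [hlcm]
    exact ((Nat.coprime_primes hq₁ hq₂).mpr hne).mul_dvd_of_dvd_of_dvd
      ((ZMod.dvd_orderOf_two_of_safe_prime hp₁ hq₁).trans (Nat.dvd_lcm_left _ _))
      ((ZMod.dvd_orderOf_two_of_safe_prime hp₂ hq₂).trans (Nat.dvd_lcm_right _ _))
  have hupper : orderOf (2 : ZMod ((2 * q₁ + 1) * (2 * q₂ + 1))) ∣ 2 * (q₁ * q₂) := by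
    rw [hlcm]
    exact Nat.lcm_dvd
      ((ZMod.orderOf_two_dvd_of_safe_prime hp₁).trans ⟨q₂, by ring⟩)
      ((ZMod.orderOf_two_dvd_of_safe_prime hp₂).trans ⟨q₁, by ring⟩)
  rw [mul_assoc 2]
  exact Nat.eq_or_eq_two_mul_of_dvd_of_dvd_two_mul (Nat.mul_pos hq₁.pos hq₂.pos) hlower hupper

theorem order_of_two_mod_safe_semiprime
    (q₁ q₂ N : ℕ) (hq₁ : q₁.Prime) (hq₂ : q₂.Prime)
    (hp₁ : (2 * q₁ + 1).Prime) (hp₂ : (2 * q₂ + 1).Prime)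
    (hne : q₁ ≠ q₂) (hq₁2 : 2 < q₁) (hq₂2 : 2 < q₂)
    (hN : N = (2 * q₁ + 1) * (2 * q₂ + 1)) :
    orderOf (2 : ZMod N) = q₁ * q₂ ∨ orderOf (2 : ZMod N) = 2 * q₁ * q₂ :=
  order_of_two_mod_safe_semiprime_general q₁ q₂ N hq₁ hq₂ hp₁ hp₂ hne hN
end

section
/- Let N = (2q₁+1)(2q₂+1) be a safe semiprime with q₁, q₂ distinct primes greater than 2. Then the number of units a modulo N whose multiplicative order is even equals (3/4)·φ(N), i.e., equals 3·q₁·q₂. -/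
/-!
By the Chinese remainder theorem `(ℤ/Nℤ)ˣ ≅ (ℤ/p₁ℤ)ˣ × (ℤ/p₂ℤ)ˣ`, and an element of a product has
odd order iff both components do. Each `(ℤ/pᵢℤ)ˣ` is cyclic of order `2qᵢ` with `qᵢ` odd, so its
elements of odd order are exactly the solutions of `x ^ qᵢ = 1`, of which there are `qᵢ`. Hence
`q₁q₂` of the `4q₁q₂` units have odd order and the remaining `3q₁q₂` have even order.
-/

theorem Nat.odd_lcm_iff {a b : ℕ} : Odd (a.lcm b) ↔ Odd a ∧ Odd b :=
  ⟨fun h => ⟨h.of_dvd_nat (dvd_lcm_left a b), h.of_dvd_nat (dvd_lcm_right a b)⟩,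
    fun ⟨ha, hb⟩ => (ha.mul hb).of_dvd_nat (lcm_dvd_mul a b)⟩

theorem Prod.odd_orderOf_iff {M N : Type*} [Monoid M] [Monoid N] (x : M × N) :
    Odd (orderOf x) ↔ Odd (orderOf x.1) ∧ Odd (orderOf x.2) := by
  rw [Prod.orderOf, Nat.odd_lcm_iff]

theorem odd_orderOf_iff_pow_eq_one {M : Type*} [Monoid M] {x : M} {m : ℕ} (hm : Odd m)
    (hx : x ^ (2 * m) = 1) : Odd (orderOf x) ↔ x ^ m = 1 := by
  rw [← orderOf_dvd_iff_pow_eq_one]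
  refine ⟨fun hodd => ?_, fun hdvd => hm.of_dvd_nat hdvd⟩
  have hcop : (orderOf x).Coprime 2 := Nat.coprime_two_right.mpr hodd
  exact hcop.dvd_of_dvd_mul_left (orderOf_dvd_of_pow_eq_one hx)

theorem MulEquiv.card_subtype_orderOf {G H : Type*} [Monoid G] [Monoid H] (e : G ≃* H)
    (P : ℕ → Prop) : Nat.card {x : G // P (orderOf x)} = Nat.card {y : H // P (orderOf y)} :=
  Nat.card_congr <| e.toEquiv.subtypeEquiv fun x => by simp [e.orderOf_eq]

theorem card_odd_orderOf_prod (G H : Type*) [Monoid G] [Monoid H] :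
    Nat.card {x : G × H // Odd (orderOf x)} =
      Nat.card {x : G // Odd (orderOf x)} * Nat.card {y : H // Odd (orderOf y)} := by
  rw [← Nat.card_prod]
  exact Nat.card_congr <| (Equiv.subtypeEquivRight Prod.odd_orderOf_iff).trans
    (Equiv.subtypeProdEquivProd (p := fun x : G => Odd (orderOf x))
      (q := fun y : H => Odd (orderOf y)))

theorem card_even_orderOf_add_card_odd_orderOf (G : Type*) [Monoid G] [Finite G] :
    Nat.card {x : G // Even (orderOf x)} + Nat.card {x : G // Odd (orderOf x)} = Nat.card G := by
  rw [← Nat.card_sum]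
  exact Nat.card_congr <| (Equiv.sumCongr (.refl _)
    (Equiv.subtypeEquivRight fun _ => Nat.not_even_iff_odd.symm)).trans (Equiv.sumCompl _)

theorem IsCyclic.card_odd_orderOf (G : Type*) [CommGroup G] [IsCyclic G] [Finite G] {m : ℕ}
    (hm : Odd m) (hG : Nat.card G = 2 * m) : Nat.card {x : G // Odd (orderOf x)} = m := by
  have hpow (x : G) : x ^ (2 * m) = 1 := hG ▸ pow_card_eq_one'
  calc Nat.card {x : G // Odd (orderOf x)}
      = Nat.card (powMonoidHom m : G →* G).ker :=
        Nat.card_congr <| Equiv.subtypeEquivRight fun x => by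
          rw [odd_orderOf_iff_pow_eq_one hm (hpow x), MonoidHom.mem_ker, powMonoidHom_apply]
    _ = m := by rw [IsCyclic.card_powMonoidHom_ker, hG, Nat.gcd_mul_left_left]

theorem ZMod.card_units_odd_orderOf_of_prime_two_mul_add_one {q : ℕ} (hq : Odd q)
    (hp : (2 * q + 1).Prime) : Nat.card {u : (ZMod (2 * q + 1))ˣ // Odd (orderOf u)} = q := by
  have := Fact.mk hp
  refine IsCyclic.card_odd_orderOf _ hq ?_
  rw [Nat.card_eq_fintype_card, ZMod.card_units, Nat.add_sub_cancel]

theorem ZMod.card_units_odd_orderOf_mul {m n : ℕ} (hmn : m.Coprime n) :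
    Nat.card {u : (ZMod (m * n))ˣ // Odd (orderOf u)} =
      Nat.card {u : (ZMod m)ˣ // Odd (orderOf u)} *
        Nat.card {u : (ZMod n)ˣ // Odd (orderOf u)} := by
  rw [← card_odd_orderOf_prod]
  exact MulEquiv.card_subtype_orderOf
    ((Units.mapEquiv (ZMod.chineseRemainder hmn).toMulEquiv).trans MulEquiv.prodUnits) Odd

theorem even_order_count_mod_safe_semiprime
    (q₁ q₂ N : ℕ) (hq₁ : q₁.Prime) (hq₂ : q₂.Prime)
    (hp₁ : (2 * q₁ + 1).Prime) (hp₂ : (2 * q₂ + 1).Prime)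
    (hne : q₁ ≠ q₂) (hq₁2 : 2 < q₁) (hq₂2 : 2 < q₂)
    (hN : N = (2 * q₁ + 1) * (2 * q₂ + 1)) :
    Nat.card {a : (ZMod N)ˣ // Even (orderOf a)} = 3 * q₁ * q₂ ∧
    4 * Nat.card {a : (ZMod N)ˣ // Even (orderOf a)} = 3 * Nat.totient N := by
  subst hN
  have hcop : (2 * q₁ + 1).Coprime (2 * q₂ + 1) := (Nat.coprime_primes hp₁ hp₂).mpr (by omega)
  have htot : Nat.totient ((2 * q₁ + 1) * (2 * q₂ + 1)) = 4 * q₁ * q₂ := by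
    rw [Nat.totient_mul hcop, Nat.totient_prime hp₁, Nat.totient_prime hp₂]
    simp only [Nat.add_sub_cancel]; ring
  have hodd :
      Nat.card {a : (ZMod ((2 * q₁ + 1) * (2 * q₂ + 1)))ˣ // Odd (orderOf a)} = q₁ * q₂ := by
    rw [ZMod.card_units_odd_orderOf_mul hcop,
      ZMod.card_units_odd_orderOf_of_prime_two_mul_add_one (hq₁.odd_of_ne_two (by omega)) hp₁,
      ZMod.card_units_odd_orderOf_of_prime_two_mul_add_one (hq₂.odd_of_ne_two (by omega)) hp₂]
  have hsum := card_even_orderOf_add_card_odd_orderOf (ZMod ((2 * q₁ + 1) * (2 * q₂ + 1)))ˣ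
  have : NeZero ((2 * q₁ + 1) * (2 * q₂ + 1)) := ⟨by positivity⟩
  rw [hodd, Nat.card_eq_fintype_card (α := (ZMod _)ˣ), ZMod.card_units_eq_totient, htot] at hsum
  have heven : Nat.card {a : (ZMod ((2 * q₁ + 1) * (2 * q₂ + 1)))ˣ // Even (orderOf a)} =
      3 * q₁ * q₂ := by linarith
  exact ⟨heven, by rw [heven, htot]; ring⟩
end

section
/- Let N = (2q₁+1)(2q₂+1) be a safe semiprime with q₁, q₂ distinct primes greater than 2. The number of units a modulo N such that the order r of a is even and a^{r/2} ≡ −1 (mod N) equals q₁·q₂, i.e., exactly one quarter of all units. -/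
/-!
Put `m = q₁ q₂`, which is odd. The Carmichael function of `N` is `lcm (2 q₁) (2 q₂)`, so
`orderOf a ∣ 2 m` for every unit `a`, and then "`r` is even and `a ^ (r / 2) = -1`" is
equivalent to `a ^ m = -1`. By the Chinese remainder theorem this splits into `x ^ m = -1`
modulo `p₁` and modulo `p₂`. Modulo a prime `p`, `x ^ m` is a square root of `1`, and since `m`
is odd, `x ↦ -x` exchanges the solutions of `x ^ m = 1` and `x ^ m = -1`; so each congruence has
`(p - 1) / 2 = q` solutions.
-/

open ArithmeticFunction

section Monoid

variable {M : Type*} [Monoid M]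

lemma pow_eq_self_of_sq_eq_one {x : M} (hx : x ^ 2 = 1) {t : ℕ} (ht : Odd t) : x ^ t = x := by
  obtain ⟨k, rfl⟩ := ht
  rw [pow_succ, pow_mul, hx, one_pow, one_mul]

variable {a : M} {m : ℕ}

lemma pow_eq_pow_orderOf_div_two (hm : Odd m) (ha : orderOf a ∣ 2 * m)
    (hr : Even (orderOf a)) : a ^ m = a ^ (orderOf a / 2) := by
  obtain ⟨s, hs⟩ := hr
  rw [← two_mul] at hs
  obtain ⟨t, rfl⟩ : s ∣ m := Nat.dvd_of_mul_dvd_mul_left two_pos (hs ▸ ha)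
  have hsq : (a ^ s) ^ 2 = 1 := by rw [← pow_mul, mul_comm, ← hs, pow_orderOf_eq_one]
  rw [hs, Nat.mul_div_cancel_left s two_pos, pow_mul,
    pow_eq_self_of_sq_eq_one hsq (Nat.odd_mul.mp hm).2]

lemma pow_eq_one_of_odd_orderOf (ha : orderOf a ∣ 2 * m) (hr : Odd (orderOf a)) :
    a ^ m = 1 :=
  orderOf_dvd_iff_pow_eq_one.mp ((Nat.coprime_two_right.mpr hr).dvd_of_dvd_mul_left ha)

lemma even_orderOf_and_pow_orderOf_div_two_eq_iff {j : M} (hj : j ≠ 1) (hm : Odd m)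
    (ha : orderOf a ∣ 2 * m) :
    (Even (orderOf a) ∧ a ^ (orderOf a / 2) = j) ↔ a ^ m = j := by
  refine ⟨fun ⟨hr, haj⟩ => pow_eq_pow_orderOf_div_two hm ha hr ▸ haj, fun haj => ?_⟩
  have hr : Even (orderOf a) := by
    by_contra hr
    exact hj (haj ▸ pow_eq_one_of_odd_orderOf ha (Nat.not_even_iff_odd.mp hr))
  exact ⟨hr, pow_eq_pow_orderOf_div_two hm ha hr ▸ haj⟩

end Monoid

lemma card_units_pow_eq_neg_one_of_ringEquiv_prod {R S T : Type*} [Ring R] [Ring S] [Ring T]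
    (f : R ≃+* S × T) (m : ℕ) :
    Nat.card {a : Rˣ // a ^ m = -1} =
      Nat.card {x : Sˣ // x ^ m = -1} * Nat.card {y : Tˣ // y ^ m = -1} := by
  let e : Rˣ ≃* Sˣ × Tˣ := (Units.mapEquiv f.toMulEquiv).trans MulEquiv.prodUnits
  rw [← Nat.card_prod]
  refine Nat.card_congr
    ((Equiv.subtypeEquiv e.toEquiv fun a => ?_).trans Equiv.subtypeProdEquivProd)
  rw [← e.injective.eq_iff, map_pow]
  simp [e, Units.ext_iff, Prod.ext_iff, MulEquiv.prodUnits]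

lemma two_mul_card_units_pow_eq_neg_one {R : Type*} [Ring R] [NoZeroDivisors R] [Finite R]
    (hR : (-1 : R) ≠ 1) {m : ℕ} (hm : Odd m) (h : ∀ x : Rˣ, x ^ (2 * m) = 1) :
    2 * Nat.card {x : Rˣ // x ^ m = -1} = Nat.card Rˣ := by
  have hR' : (-1 : Rˣ) ≠ 1 := fun h => hR (congrArg Units.val h)
  have hsq : ∀ x : Rˣ, x ^ m = 1 ∨ x ^ m = -1 := by
    intro x
    have : ((x ^ m : Rˣ) : R) ^ 2 = 1 := by
      rw [← Units.val_pow_eq_pow_val, ← pow_mul, mul_comm, h, Units.val_one]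
    simpa [Units.ext_iff] using this
  have hswap : {x : Rˣ // x ^ m = 1} ≃ {x : Rˣ // x ^ m = -1} :=
    Equiv.subtypeEquiv (Equiv.neg Rˣ) fun x => by simp [hm.neg_pow]
  have hcompl : {x : Rˣ // ¬ x ^ m = -1} ≃ {x : Rˣ // x ^ m = 1} :=
    Equiv.subtypeEquivRight fun x =>
      ⟨(hsq x).resolve_right, fun h1 h2 => hR' (h2 ▸ h1)⟩
  calc 2 * Nat.card {x : Rˣ // x ^ m = -1}
      = Nat.card {x : Rˣ // x ^ m = -1} + Nat.card {x : Rˣ // ¬ x ^ m = -1} := by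
        rw [Nat.card_congr (hcompl.trans hswap), two_mul]
    _ = Nat.card Rˣ := by
        classical
        rw [← Nat.card_sum]; exact Nat.card_congr (Equiv.sumCompl _)

lemma ZMod.two_mul_card_units_pow_eq_neg_one {p m : ℕ} [Fact p.Prime] (hp : p ≠ 2)
    (hm : Odd m) (hpm : p - 1 ∣ 2 * m) :
    2 * Nat.card {x : (ZMod p)ˣ // x ^ m = -1} = p - 1 := by
  have : Fact (2 < p) := ⟨(Fact.out : p.Prime).two_le.lt_of_ne' hp⟩
  rw [_root_.two_mul_card_units_pow_eq_neg_one ZMod.neg_one_ne_one hm, Nat.card_eq_fintype_card,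
    ZMod.card_units]
  intro x
  obtain ⟨k, hk⟩ := hpm
  rw [hk, pow_mul, ZMod.units_pow_card_sub_one_eq_one, one_pow]

lemma carmichael_mul_dvd {p₁ p₂ n : ℕ} (hp₁ : p₁.Prime) (hp₂ : p₂.Prime) (hne : p₁ ≠ p₂)
    (h₁ : p₁ - 1 ∣ n) (h₂ : p₂ - 1 ∣ n) : carmichael (p₁ * p₂) ∣ n := by
  rw [carmichael_mul ((Nat.coprime_primes hp₁ hp₂).mpr hne)]
  exact Nat.lcm_dvd ((carmichael_dvd_totient p₁).trans (Nat.totient_prime hp₁ ▸ h₁))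
    ((carmichael_dvd_totient p₂).trans (Nat.totient_prime hp₂ ▸ h₂))

theorem minus_one_halforder_count_mod_safe_semiprime
    (q₁ q₂ N : ℕ) (hq₁ : q₁.Prime) (hq₂ : q₂.Prime)
    (hp₁ : (2 * q₁ + 1).Prime) (hp₂ : (2 * q₂ + 1).Prime)
    (hne : q₁ ≠ q₂) (hq₁2 : 2 < q₁) (hq₂2 : 2 < q₂)
    (hN : N = (2 * q₁ + 1) * (2 * q₂ + 1)) :
    Nat.card {a : (ZMod N)ˣ // Even (orderOf a) ∧ a ^ (orderOf a / 2) = -1} = q₁ * q₂ ∧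
    4 * Nat.card {a : (ZMod N)ˣ // Even (orderOf a) ∧ a ^ (orderOf a / 2) = -1}
      = Nat.totient N := by
  subst hN
  have : Fact (2 * q₁ + 1).Prime := ⟨hp₁⟩
  have : Fact (2 * q₂ + 1).Prime := ⟨hp₂⟩
  have : Fact (2 < (2 * q₁ + 1) * (2 * q₂ + 1)) := ⟨by nlinarith⟩
  have hcop : Nat.Coprime (2 * q₁ + 1) (2 * q₂ + 1) := (Nat.coprime_primes hp₁ hp₂).mpr (by omega)
  have hm : Odd (q₁ * q₂) := (hq₁.odd_of_ne_two hq₁2.ne').mul (hq₂.odd_of_ne_two hq₂2.ne')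
  have h₁ : 2 * q₁ + 1 - 1 ∣ 2 * (q₁ * q₂) := ⟨q₂, by rw [Nat.add_sub_cancel, mul_assoc]⟩
  have h₂ : 2 * q₂ + 1 - 1 ∣ 2 * (q₁ * q₂) := ⟨q₁, by rw [Nat.add_sub_cancel]; ring⟩
  have hcarm := carmichael_mul_dvd hp₁ hp₂ (by omega) h₁ h₂
  have hneg : (-1 : (ZMod ((2 * q₁ + 1) * (2 * q₂ + 1)))ˣ) ≠ 1 :=
    fun h => ZMod.neg_one_ne_one (congrArg Units.val h)
  have hcount : Nat.card {a : (ZMod ((2 * q₁ + 1) * (2 * q₂ + 1)))ˣ //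
      Even (orderOf a) ∧ a ^ (orderOf a / 2) = -1} = q₁ * q₂ := by
    rw [Nat.card_congr (Equiv.subtypeEquivRight fun a =>
        even_orderOf_and_pow_orderOf_div_two_eq_iff hneg hm
          ((orderOf_dvd_of_pow_eq_one (pow_carmichael a)).trans hcarm)),
      card_units_pow_eq_neg_one_of_ringEquiv_prod (ZMod.chineseRemainder hcop)]
    have c₁ := ZMod.two_mul_card_units_pow_eq_neg_one (by omega) hm h₁
    have c₂ := ZMod.two_mul_card_units_pow_eq_neg_one (by omega) hm h₂
    congr 1 <;> omega
  refine ⟨hcount, ?_⟩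
  rw [hcount, Nat.totient_mul hcop, Nat.totient_prime hp₁, Nat.totient_prime hp₂]
  simp only [Nat.add_sub_cancel]
  ring
end

section
/- Let N be odd and composite, a a unit modulo N with even multiplicative order r, and suppose a^{r/2} is not congruent to −1 and not congruent to 1 modulo N. Then gcd(a^{r/2} − 1, N) is a nontrivial divisor of N (i.e., 1 < gcd(a^{r/2} − 1, N) < N). -/
/-!
Write `m = a ^ (r / 2)`. Since `m² ≡ 1`, `N` divides `(m - 1)(m + 1)`, while `m ≢ ±1` says that
`N` divides neither factor. Hence `gcd (m - 1) N` is not `N`, and it is not `1` either, for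
otherwise `N` would divide `m + 1`.
-/

theorem Nat.gcd_lt_right_of_not_dvd {b N : ℕ} (hN : 0 < N) (h : ¬ N ∣ b) : b.gcd N < N :=
  (Nat.gcd_le_right b hN).lt_of_ne (mt Nat.gcd_eq_right_iff_dvd.mp h)

theorem Nat.one_lt_gcd_of_dvd_mul_of_not_dvd {b c N : ℕ} (hN : N ≠ 0) (h : N ∣ b * c)
    (hc : ¬ N ∣ c) : 1 < b.gcd N := by
  have h0 : b.gcd N ≠ 0 := by simp [hN]
  have h1 : b.gcd N ≠ 1 := fun hcop => hc ((Nat.Coprime.symm hcop).dvd_of_dvd_mul_left h)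
  omega

namespace ZMod

theorem natCast_eq_one_iff_dvd_sub_one {N m : ℕ} (hm : 1 ≤ m) :
    (m : ZMod N) = 1 ↔ N ∣ m - 1 := by
  rw [← natCast_eq_zero_iff, Nat.cast_sub hm, Nat.cast_one, sub_eq_zero]

theorem natCast_eq_neg_one_iff_dvd_add_one {N m : ℕ} :
    (m : ZMod N) = -1 ↔ N ∣ m + 1 := by
  rw [← natCast_eq_zero_iff, Nat.cast_add, Nat.cast_one, add_eq_zero_iff_eq_neg]

theorem dvd_sub_one_mul_add_one_of_sq_eq_one {N m : ℕ} (hm : 1 ≤ m) (hsq : (m : ZMod N) ^ 2 = 1) :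
    N ∣ (m - 1) * (m + 1) := by
  rw [← natCast_eq_zero_iff]
  push_cast [Nat.cast_sub hm]
  linear_combination hsq

theorem one_lt_gcd_sub_one_and_lt_of_sq_eq_one {N m : ℕ} (hN : 0 < N)
    (hsq : (m : ZMod N) ^ 2 = 1) (h1 : (m : ZMod N) ≠ 1) (hm1 : (m : ZMod N) ≠ -1) :
    1 < (m - 1).gcd N ∧ (m - 1).gcd N < N := by
  have hm : 1 ≤ m := by
    rcases Nat.eq_zero_or_pos m with rfl | hm
    · exact absurd (by simpa using hsq) h1
    · exact hm
  rw [Ne, natCast_eq_one_iff_dvd_sub_one hm] at h1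
  rw [Ne, natCast_eq_neg_one_iff_dvd_add_one] at hm1
  exact ⟨Nat.one_lt_gcd_of_dvd_mul_of_not_dvd hN.ne'
      (dvd_sub_one_mul_add_one_of_sq_eq_one hm hsq) hm1,
    Nat.gcd_lt_right_of_not_dvd hN h1⟩

end ZMod

theorem pow_orderOf_div_two_sq {M : Type*} [Monoid M] {x : M} (h : Even (orderOf x)) :
    (x ^ (orderOf x / 2)) ^ 2 = 1 := by
  rw [← pow_mul, Nat.div_mul_cancel h.two_dvd, pow_orderOf_eq_one]

theorem shor_gcd_nontrivial_general
    (N a : ℕ) (hN1 : 1 < N)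
    (r : ℕ) (hr : r = orderOf (a : ZMod N)) (hre : Even r)
    (h1 : (a : ZMod N) ^ (r / 2) ≠ 1) (hm1 : (a : ZMod N) ^ (r / 2) ≠ -1) :
    1 < Nat.gcd (a ^ (r / 2) - 1) N ∧ Nat.gcd (a ^ (r / 2) - 1) N < N := by
  subst hr
  have hsq := pow_orderOf_div_two_sq hre
  rw [← Nat.cast_pow] at hsq h1 hm1
  exact ZMod.one_lt_gcd_sub_one_and_lt_of_sq_eq_one (by omega) hsq h1 hm1

theorem shor_gcd_nontrivial
    (N a : ℕ) (hN1 : 1 < N) (hodd : Odd N) (hcomp : ¬ N.Prime)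
    (hcop : Nat.Coprime a N)
    (r : ℕ) (hr : r = orderOf (a : ZMod N)) (hre : Even r)
    (h1 : (a : ZMod N) ^ (r / 2) ≠ 1) (hm1 : (a : ZMod N) ^ (r / 2) ≠ -1) :
    1 < Nat.gcd (a ^ (r / 2) - 1) N ∧ Nat.gcd (a ^ (r / 2) - 1) N < N :=
  shor_gcd_nontrivial_general N a hN1 r hr hre h1 hm1
end

section
/- Let N = (2q₁+1)(2q₂+1) be a safe semiprime with q₁ ≠ q₂ primes greater than 2, and let r = ord_N(2). The number of integers t with 1 ≤ t ≤ r such that r/gcd(t, r) ∈ {1, 2} equals r/(q₁q₂); hence a uniformly random such t yields d = r/gcd(t,r) ∉ {1,2} with probability 1 − 1/(q₁q₂). -/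
/-!
Modulo a safe prime `p = 2q + 1` the order of `2` divides `p - 1 = 2q` but not `2`, since
`p ∤ 3`; hence `q ∣ ord_p(2) ∣ 2q`. By the Chinese remainder theorem `ord_N(2)` is the lcm of
the two orders, so `r = k q₁ q₂` with `k ∈ {1, 2}`. Now `r / gcd(t, r) ∣ 2` exactly when
`r / gcd(r, 2) ∣ t`, so the bad `t ∈ [1, r]` are the multiples of `r / gcd(r, 2)`, and there are
`gcd(r, 2) = k = r / (q₁ q₂)` of them, as `q₁ q₂` is odd.
-/

open Finset

namespace Nat

theorem dvd_mul_iff_div_gcd_dvd {a b c : ℕ} (ha : 0 < a) : a ∣ b * c ↔ a / a.gcd b ∣ c :=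
  calc a ∣ b * c ↔ a ∣ a.gcd b * c := dvd_gcd_mul_iff_dvd_mul.symm
    _ ↔ a.gcd b * (a / a.gcd b) ∣ a.gcd b * c := by rw [Nat.mul_div_cancel' (a.gcd_dvd_left b)]
    _ ↔ a / a.gcd b ∣ c := Nat.mul_dvd_mul_iff_left (Nat.gcd_pos_of_pos_left b ha)

theorem div_gcd_dvd_iff_dvd_mul {r t k : ℕ} (hr : 0 < r) : r / t.gcd r ∣ k ↔ r ∣ t * k := by
  rw [Nat.div_dvd_iff_dvd_mul (Nat.gcd_dvd_right t r) (Nat.gcd_pos_of_pos_right t hr),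
    Nat.gcd_comm]
  exact dvd_gcd_mul_iff_dvd_mul

theorem card_Icc_filter_div_gcd_dvd {r : ℕ} (k : ℕ) (hr : 0 < r) :
    #{t ∈ Icc 1 r | r / t.gcd r ∣ k} = r.gcd k := by
  have key (t : ℕ) : r / t.gcd r ∣ k ↔ r / r.gcd k ∣ t := by
    rw [div_gcd_dvd_iff_dvd_mul hr, mul_comm, dvd_mul_iff_div_gcd_dvd hr]
  simp_rw [key]
  rw [← zero_add 1, Icc_add_one_left_eq_Ioc, Ioc_filter_dvd_card_eq_div,
    Nat.div_div_self (Nat.gcd_dvd_left r k) hr.ne']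

theorem gcd_two_eq_div_of_dvd_of_dvd_two_mul {m r : ℕ} (hm : Odd m) (hmr : m ∣ r)
    (hr : r ∣ 2 * m) : r.gcd 2 = r / m := by
  obtain ⟨k, rfl⟩ := hmr
  have hk : k ∣ 2 := (Nat.mul_dvd_mul_iff_left hm.pos).mp (by rwa [mul_comm 2] at hr)
  rw [Nat.Coprime.gcd_mul_left_cancel k hm.coprime_two_right, Nat.gcd_eq_left hk,
    Nat.mul_div_cancel_left k hm.pos]

end Nat

theorem ZMod.orderOf_natCast_mul {m n : ℕ} (h : m.Coprime n) (a : ℕ) :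
    orderOf (a : ZMod (m * n)) = (orderOf (a : ZMod m)).lcm (orderOf (a : ZMod n)) := by
  rw [← (ZMod.chineseRemainder h).toMulEquiv.orderOf_eq, Prod.orderOf]
  simp

theorem orderOf_two_safe_prime {q : ℕ} (hq : q.Prime) (hp : (2 * q + 1).Prime) :
    q ∣ orderOf (2 : ZMod (2 * q + 1)) ∧ orderOf (2 : ZMod (2 * q + 1)) ∣ 2 * q := by
  have := Fact.mk hp
  have hq2 := hq.two_le
  have h2 : (2 : ZMod (2 * q + 1)) ≠ 0 := by
    simpa using (ZMod.natCast_eq_zero_iff 2 _).not.mpr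
      (Nat.not_dvd_of_pos_of_lt two_pos (by omega))
  have hdvd : orderOf (2 : ZMod (2 * q + 1)) ∣ 2 * q := by
    simpa using ZMod.orderOf_dvd_card_sub_one h2
  refine ⟨by_contra fun hnd => ?_, hdvd⟩
  have h22 : (2 : ZMod (2 * q + 1)) ^ 2 = 1 := orderOf_dvd_iff_pow_eq_one.mp
    ((hq.coprime_iff_not_dvd.mpr hnd).symm.dvd_of_dvd_mul_right hdvd)
  have h3 : ((3 : ℕ) : ZMod (2 * q + 1)) = 0 := by
    push_cast; linear_combination h22
  exact Nat.not_dvd_of_pos_of_lt three_pos (by omega) ((ZMod.natCast_eq_zero_iff 3 _).mp h3)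

theorem orderOf_two_safe_semiprime {q₁ q₂ : ℕ} (hq₁ : q₁.Prime) (hq₂ : q₂.Prime)
    (hp₁ : (2 * q₁ + 1).Prime) (hp₂ : (2 * q₂ + 1).Prime) (hne : q₁ ≠ q₂) :
    q₁ * q₂ ∣ orderOf (2 : ZMod ((2 * q₁ + 1) * (2 * q₂ + 1))) ∧
      orderOf (2 : ZMod ((2 * q₁ + 1) * (2 * q₂ + 1))) ∣ 2 * (q₁ * q₂) := by
  obtain ⟨hq₁o, ho₁⟩ := orderOf_two_safe_prime hq₁ hp₁
  obtain ⟨hq₂o, ho₂⟩ := orderOf_two_safe_prime hq₂ hp₂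
  have hcrt := ZMod.orderOf_natCast_mul ((Nat.coprime_primes hp₁ hp₂).mpr (by omega)) 2
  simp only [Nat.cast_ofNat] at hcrt
  rw [hcrt]
  exact ⟨((Nat.coprime_primes hq₁ hq₂).mpr hne).mul_dvd_of_dvd_of_dvd
      (hq₁o.trans (Nat.dvd_lcm_left _ _)) (hq₂o.trans (Nat.dvd_lcm_right _ _)),
    Nat.lcm_dvd (ho₁.trans ⟨q₂, by ring⟩) (ho₂.trans ⟨q₁, by ring⟩)⟩

theorem qofa_bad_output_count
    (q₁ q₂ N : ℕ) (hq₁ : q₁.Prime) (hq₂ : q₂.Prime)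
    (hp₁ : (2 * q₁ + 1).Prime) (hp₂ : (2 * q₂ + 1).Prime)
    (hne : q₁ ≠ q₂) (hq₁2 : 2 < q₁) (hq₂2 : 2 < q₂)
    (hN : N = (2 * q₁ + 1) * (2 * q₂ + 1))
    (r : ℕ) (hr : r = orderOf (2 : ZMod N)) :
    ((Finset.Icc 1 r).filter
        (fun t => r / Nat.gcd t r = 1 ∨ r / Nat.gcd t r = 2)).card = r / (q₁ * q₂) ∧
    ((Finset.Icc 1 r).filter
        (fun t => r / Nat.gcd t r ≠ 1 ∧ r / Nat.gcd t r ≠ 2)).card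
      = r - r / (q₁ * q₂) := by
  subst hN
  obtain ⟨hmr, hr2m⟩ := hr ▸ orderOf_two_safe_semiprime hq₁ hq₂ hp₁ hp₂ hne
  have hr0 : 0 < r := Nat.pos_of_dvd_of_pos hr2m (by positivity)
  have hodd : Odd (q₁ * q₂) := (hq₁.odd_of_ne_two hq₁2.ne').mul (hq₂.odd_of_ne_two hq₂2.ne')
  have hcount : #{t ∈ Icc 1 r | r / t.gcd r = 1 ∨ r / t.gcd r = 2} = r / (q₁ * q₂) := by
    simp_rw [← Nat.dvd_prime Nat.prime_two]
    rw [Nat.card_Icc_filter_div_gcd_dvd 2 hr0,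
      Nat.gcd_two_eq_div_of_dvd_of_dvd_two_mul hodd hmr hr2m]
  have hsplit := card_filter_add_card_filter_not (s := Icc 1 r)
    (fun t => r / t.gcd r = 1 ∨ r / t.gcd r = 2)
  simp only [not_or, ← ne_eq, Nat.card_Icc, add_tsub_cancel_right, hcount] at hsplit
  exact ⟨hcount, by omega⟩
end

section
/- Let N = (2q₁+1)(2q₂+1) be a safe semiprime with q₁ ≠ q₂ primes greater than 2. If a unit a modulo N has order 2 and a ≢ −1 (mod N), then a > √(N+1); in particular 2 never has order 2 modulo N. -/
/-!
If `a² = 1` and `a ≠ 1` in `ZMod N`, then `N ∣ a² - 1 ≠ 0`, so `a² ≥ N + 1` for the least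
positive representative. Equality would give `(a - 1)(a + 1) = p₁ p₂`, so `p₁` and `p₂` would be
twin primes, i.e. `q` and `q + 1` would both be prime, which forces `q = 2`.
For `a = 2`, `2² = 1` would mean `N ∣ 3`.
-/

theorem Nat.Prime.eq_two_of_prime_add_one {q : ℕ} (hq : q.Prime) (hq' : (q + 1).Prime) :
    q = 2 := by
  rcases hq.eq_two_or_odd' with h | h
  · exact h
  · have h2 : q + 1 = 2 := hq'.even_iff.mp h.add_one
    exact absurd (by omega) hq.ne_one

theorem Nat.Prime.two_mul_add_one_ne_add_two {q q' : ℕ} (hq : q.Prime) (hq' : q'.Prime)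
    (h2 : 2 < q) : 2 * q' + 1 ≠ 2 * q + 1 + 2 := fun h =>
  h2.ne' (hq.eq_two_of_prime_add_one (by rwa [show q' = q + 1 by omega] at hq'))

theorem Nat.eq_and_eq_or_of_mul_eq_prime_mul {m n p q : ℕ} (hp : p.Prime) (hq : q.Prime)
    (hm : m ≠ 1) (hn : n ≠ 1) (h : m * n = p * q) : (m = p ∧ n = q) ∨ (m = q ∧ n = p) := by
  have hpq : p ∣ m * n := h ▸ dvd_mul_right p q
  rcases hp.dvd_mul.mp hpq with ⟨k, rfl⟩ | ⟨k, rfl⟩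
  · have hkn : k * n = q := by
      apply Nat.eq_of_mul_eq_mul_left hp.pos
      rw [← h, mul_assoc]
    rcases Nat.prime_mul_iff.mp (hkn ▸ hq) with ⟨_, rfl⟩ | ⟨_, rfl⟩
    · exact absurd rfl hn
    · left; simpa using hkn
  · have hmk : m * k = q := by
      apply Nat.eq_of_mul_eq_mul_left hp.pos
      rw [← h]; ring
    rcases Nat.prime_mul_iff.mp (hmk ▸ hq) with ⟨_, rfl⟩ | ⟨_, rfl⟩
    · right; simpa using hmk
    · exact absurd rfl hm

theorem Nat.sq_ne_prime_mul_add_one {p q : ℕ} (hp : p.Prime) (hq : q.Prime)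
    (hpq : q ≠ p + 2) (hqp : p ≠ q + 2) (x : ℕ) : x ^ 2 ≠ p * q + 1 := by
  intro hx
  obtain ⟨y, rfl⟩ : ∃ y, x = y + 1 :=
    Nat.exists_eq_add_one.mpr (Nat.pos_of_ne_zero (by rintro rfl; simp at hx))
  have hy : y * (y + 2) = p * q := by nlinarith
  have hy1 : y ≠ 1 := by
    rintro rfl
    exact Nat.not_prime_mul hp.ne_one hq.ne_one (hy ▸ Nat.prime_three)
  rcases Nat.eq_and_eq_or_of_mul_eq_prime_mul hp hq hy1 (by omega) hy with ⟨rfl, rfl⟩ | ⟨rfl, rfl⟩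
  · exact hpq rfl
  · exact hqp rfl

theorem ZMod.add_one_le_val_sq_of_orderOf_eq_two {N : ℕ} [NeZero N] {a : (ZMod N)ˣ}
    (ha : orderOf a = 2) : N + 1 ≤ (a : ZMod N).val ^ 2 := by
  have ha1 : a ≠ 1 := by rintro rfl; simp at ha
  have hN : 1 < N := by
    refine lt_of_le_of_ne (NeZero.one_le) fun h => ha1 ?_
    subst h
    exact Subsingleton.elim _ _
  have : Nontrivial (ZMod N) := ZMod.nontrivial_iff.mpr hN.ne'
  set x := (a : ZMod N).val with hx
  have hx0 : x ≠ 0 := fun h => a.ne_zero ((ZMod.val_eq_zero _).mp h)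
  have hx1 : x ≠ 1 := fun h => ha1 (Units.ext ((ZMod.val_eq_one hN _).mp h))
  have hsq : x ^ 2 ≡ 1 [MOD N] := by
    rw [← ZMod.natCast_eq_natCast_iff, Nat.cast_pow, hx, ZMod.natCast_zmod_val, Nat.cast_one,
      ← Units.val_pow_eq_pow_val, ← ha, pow_orderOf_eq_one, Units.val_one]
  have hpos : 1 < x ^ 2 := Nat.one_lt_pow two_ne_zero (by omega)
  have := Nat.le_of_dvd (by omega) ((Nat.modEq_iff_dvd' hpos.le).mp hsq.symm)
  omega

theorem ZMod.orderOf_two_ne_two {N : ℕ} (hN : N ≠ 3) : orderOf (2 : ZMod N) ≠ 2 := by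
  intro h
  obtain ⟨h4, h21⟩ := (orderOf_eq_prime_iff (p := 2)).mp h
  have h3 : ((3 : ℕ) : ZMod N) = 0 := by
    push_cast; linear_combination h4
  rcases (Nat.dvd_prime Nat.prime_three).mp ((ZMod.natCast_eq_zero_iff 3 N).mp h3) with rfl | rfl
  · exact h21 (Subsingleton.elim _ _)
  · exact hN rfl

theorem order_two_elements_are_large_general
    (q₁ q₂ N : ℕ) (hq₁ : q₁.Prime) (hq₂ : q₂.Prime)
    (hp₁ : (2 * q₁ + 1).Prime) (hp₂ : (2 * q₂ + 1).Prime)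
    (hq₁2 : 2 < q₁) (hq₂2 : 2 < q₂)
    (hN : N = (2 * q₁ + 1) * (2 * q₂ + 1)) :
    (∀ a : (ZMod N)ˣ, orderOf a = 2 → a ≠ -1 →
        (((a : ZMod N).val : ℝ) > Real.sqrt (N + 1))) ∧
    orderOf (2 : ZMod N) ≠ 2 := by
  have hsq : ∀ x : ℕ, x ^ 2 ≠ N + 1 := hN ▸
    Nat.sq_ne_prime_mul_add_one hp₁ hp₂ (hq₁.two_mul_add_one_ne_add_two hq₂ hq₁2)
      (hq₂.two_mul_add_one_ne_add_two hq₁ hq₂2)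
  have : NeZero N := ⟨by rw [hN]; positivity⟩
  refine ⟨fun a ha _ => ?_, ZMod.orderOf_two_ne_two ?_⟩
  · have hlt : N + 1 < (a : ZMod N).val ^ 2 :=
      (ZMod.add_one_le_val_sq_of_orderOf_eq_two ha).lt_of_ne (hsq _).symm
    have hpos : 0 < (a : ZMod N).val := Nat.pos_of_ne_zero fun h => by simp [h] at hlt
    rw [gt_iff_lt, Real.sqrt_lt' (by exact_mod_cast hpos)]
    exact_mod_cast hlt
  · rw [hN]
    exact fun h => Nat.not_prime_mul hp₁.ne_one hp₂.ne_one (h ▸ Nat.prime_three)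

theorem order_two_elements_are_large
    (q₁ q₂ N : ℕ) (hq₁ : q₁.Prime) (hq₂ : q₂.Prime)
    (hp₁ : (2 * q₁ + 1).Prime) (hp₂ : (2 * q₂ + 1).Prime)
    (hne : q₁ ≠ q₂) (hq₁2 : 2 < q₁) (hq₂2 : 2 < q₂)
    (hN : N = (2 * q₁ + 1) * (2 * q₂ + 1)) :
    (∀ a : (ZMod N)ˣ, orderOf a = 2 → a ≠ -1 →
        (((a : ZMod N).val : ℝ) > Real.sqrt (N + 1))) ∧
    orderOf (2 : ZMod N) ≠ 2 :=
  order_two_elements_are_large_general q₁ q₂ N hq₁ hq₂ hp₁ hp₂ hq₁2 hq₂2 hN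
end

section
/- For an odd integer N > 1 coprime to a, if r = ord_N(a) is even and ℓ is a prime dividing r such that a^{r/ℓ} ≢ 1 (mod p) fails for at least one but not all prime divisors p of N (i.e., a^{r/ℓ} ≡ 1 modulo some prime factor of N but not modulo all of them), then gcd(a^{r/ℓ} − 1, N) is a nontrivial divisor of N. -/
theorem ZMod.natCast_eq_one_iff_dvd_sub_one_s19 {m : ℕ} (hm : 1 ≤ m) (s : ℕ) :
    (m : ZMod s) = 1 ↔ s ∣ m - 1 := by
  rw [← ZMod.natCast_eq_zero_iff, Nat.cast_sub hm, Nat.cast_one, sub_eq_zero]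

theorem Nat.one_lt_gcd_and_gcd_lt_of_dvd_of_not_dvd {x N p q : ℕ} (hN : 0 < N) (hp : 1 < p)
    (hpx : p ∣ x) (hpN : p ∣ N) (hqx : ¬q ∣ x) (hqN : q ∣ N) :
    1 < Nat.gcd x N ∧ Nat.gcd x N < N := by
  refine ⟨hp.trans_le (Nat.le_of_dvd (Nat.gcd_pos_of_pos_right x hN) (Nat.dvd_gcd hpx hpN)), ?_⟩
  refine (Nat.le_of_dvd hN (Nat.gcd_dvd_right x N)).lt_of_ne fun h => hqx ?_
  exact hqN.trans (h ▸ Nat.gcd_dvd_left x N)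

theorem gcd_prime_power_trick_nontrivial_general
    (N a : ℕ) (hN1 : 1 < N) (hcop : Nat.Coprime a N)
    (r ℓ : ℕ)
    (hsome : ∃ p : ℕ, p.Prime ∧ p ∣ N ∧ (a : ZMod p) ^ (r / ℓ) = 1)
    (hnotall : ∃ p : ℕ, p.Prime ∧ p ∣ N ∧ (a : ZMod p) ^ (r / ℓ) ≠ 1) :
    1 < Nat.gcd (a ^ (r / ℓ) - 1) N ∧ Nat.gcd (a ^ (r / ℓ) - 1) N < N := by
  obtain ⟨p, hp, hpN, hp1⟩ := hsome
  obtain ⟨q, -, hqN, hq1⟩ := hnotall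
  have ha : a ≠ 0 := by
    rintro rfl
    exact hN1.ne' (Nat.coprime_zero_left N |>.mp hcop)
  have hdvd (s : ℕ) : (a : ZMod s) ^ (r / ℓ) = 1 ↔ s ∣ a ^ (r / ℓ) - 1 := by
    rw [← Nat.cast_pow, ZMod.natCast_eq_one_iff_dvd_sub_one_s19 (Nat.one_le_pow _ _ (by omega))]
  exact Nat.one_lt_gcd_and_gcd_lt_of_dvd_of_not_dvd (by omega) hp.one_lt
    ((hdvd p).mp hp1) hpN (mt (hdvd q).mpr hq1) hqN

theorem gcd_prime_power_trick_nontrivial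
    (N a : ℕ) (hN1 : 1 < N) (hodd : Odd N) (hcop : Nat.Coprime a N)
    (r ℓ : ℕ) (hr : r = orderOf (a : ZMod N)) (hre : Even r)
    (hℓ : ℓ.Prime) (hℓr : ℓ ∣ r)
    (hsome : ∃ p : ℕ, p.Prime ∧ p ∣ N ∧ (a : ZMod p) ^ (r / ℓ) = 1)
    (hnotall : ∃ p : ℕ, p.Prime ∧ p ∣ N ∧ (a : ZMod p) ^ (r / ℓ) ≠ 1) :
    1 < Nat.gcd (a ^ (r / ℓ) - 1) N ∧ Nat.gcd (a ^ (r / ℓ) - 1) N < N :=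
  gcd_prime_power_trick_nontrivial_general N a hN1 hcop r ℓ hsome hnotall
end
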